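/- arXiv:1202.0864 — 2 statements merged into one kernel-verified Lean document; each statement's English description precedes it below -/
import Mathlib

section
/- Let p be a prime. Let G ∈ Z_p^{l×n}, ΔG ∈ Z_p^{k×n}, and B ∈ Z_p^n be mutually independent and each uniformly distributed. Then for any a, ã ∈ Z_p^l and m, m̃ ∈ Z_p^k with m ≠ m̃, the random vectors aG + mΔG + B and ãG + m̃ΔG + B are independent and each uniform on Z_p^n. -/
open Matrix Finset

/-!
Both vectors are values of the additive homomorphism `(G, ΔG, B) ↦ (aG + mΔG + B, ãG + m̃ΔG + B)`,
so it suffices that this homomorphism is onto: then all its fibres have the same size. It is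
onto already on `G = 0`: since `m̃ - m ≠ 0`, a suitable `ΔG` makes the difference
`(m̃ - m)ΔG` of the two outputs arbitrary, and `B` then fixes the first output.
-/

theorem AddMonoidHom.card_fiber_mul_card_eq_of_surjective {G M : Type*} [AddGroup G]
    [Fintype G] [AddMonoid M] [Fintype M] [DecidableEq M] (f : G →+ M)
    (hf : Function.Surjective f) (y : M) :
    #{g | f g = y} * Fintype.card M = Fintype.card G := by
  have hfiber : ∀ x : M, #{g | f g = x} = #{g | f g = y} := fun x =>
    card_fiber_eq_of_mem_range f (hf x) (hf y)
  calc #{g | f g = y} * Fintype.card M = ∑ x, #{g | f g = x} := by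
        rw [sum_congr rfl fun x _ => hfiber x, sum_const, card_univ, smul_eq_mul, mul_comm]
    _ = Fintype.card G := (card_eq_sum_card_fiberwise fun g _ => mem_univ (f g)).symm

section

variable {K : Type*} [Field K] {ι κ : Type*} [Fintype ι] [DecidableEq ι]

theorem Matrix.exists_dotProduct_eq_one {w : ι → K} (hw : w ≠ 0) : ∃ x, w ⬝ᵥ x = 1 := by
  obtain ⟨i, hi⟩ := Function.ne_iff.mp hw
  exact ⟨Pi.single i (w i)⁻¹, by rw [dotProduct_single, mul_inv_cancel₀ hi]⟩

theorem Matrix.vecMul_surjective_of_ne_zero {w : ι → K} (hw : w ≠ 0) :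
    Function.Surjective fun D : Matrix ι κ K => w ᵥ* D := by
  obtain ⟨x, hx⟩ := exists_dotProduct_eq_one hw
  exact fun v => ⟨vecMulVec x v, by dsimp only; rw [vecMul_vecMulVec, hx, one_smul]⟩

end

section

variable {R : Type*} [CommRing R] {ι κ ν : Type*} [Fintype ι] [Fintype κ]

def twoMaskedQueries (a a' : ι → R) (m m' : κ → R) :
    Matrix ι ν R × Matrix κ ν R × (ν → R) →+ (ν → R) × (ν → R) where
  toFun T := (a ᵥ* T.1 + m ᵥ* T.2.1 + T.2.2, a' ᵥ* T.1 + m' ᵥ* T.2.1 + T.2.2)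
  map_zero' := by simp
  map_add' T T' := by
    simp only [Prod.fst_add, Prod.snd_add, vecMul_add, Prod.mk_add_mk, Prod.mk.injEq]
    constructor <;> abel

theorem twoMaskedQueries_apply (a a' : ι → R) (m m' : κ → R)
    (T : Matrix ι ν R × Matrix κ ν R × (ν → R)) :
    twoMaskedQueries a a' m m' T =
      (a ᵥ* T.1 + m ᵥ* T.2.1 + T.2.2, a' ᵥ* T.1 + m' ᵥ* T.2.1 + T.2.2) :=
  rfl

end

theorem twoMaskedQueries_surjective {K : Type*} [Field K] {ι κ ν : Type*} [Fintype ι] [Fintype κ]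
    [DecidableEq κ] (a a' : ι → K) {m m' : κ → K} (hm : m ≠ m') :
    Function.Surjective (twoMaskedQueries (ν := ν) a a' m m') := by
  rintro ⟨v, v'⟩
  obtain ⟨D, hD⟩ := vecMul_surjective_of_ne_zero (κ := ν) (sub_ne_zero.mpr hm.symm) (v' - v)
  simp only [sub_vecMul] at hD
  refine ⟨(0, D, v - m ᵥ* D), ?_⟩
  simp only [twoMaskedQueries_apply, vecMul_zero, zero_add, Prod.mk.injEq]
  constructor
  · abel
  · linear_combination hD

/-- For mutually independent uniformly random `G ∈ Z_p^{l×n}`, `ΔG ∈ Z_p^{k×n}`, `B ∈ Z_p^n`,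
and any `a, a' ∈ Z_p^l`, `m ≠ m̃` in `Z_p^k`, the random vectors `aG + mΔG + B` and
`a'G + m̃ΔG + B` are independent and each uniform on `Z_p^n`; equivalently, for all
`u, u' ∈ Z_p^n` the probability that both equalities hold is `p^{-2n}`. -/
theorem stmt2 (p : ℕ) (hp : p.Prime) [NeZero p] (l n k : ℕ)
    (a a' : Fin l → ZMod p) (m mt : Fin k → ZMod p) (hne : m ≠ mt)
    (u u' : Fin n → ZMod p) :
    (Finset.univ.filter
        (fun T : Matrix (Fin l) (Fin n) (ZMod p) × Matrix (Fin k) (Fin n) (ZMod p) ×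
            (Fin n → ZMod p) =>
          a ᵥ* T.1 + m ᵥ* T.2.1 + T.2.2 = u ∧ a' ᵥ* T.1 + mt ᵥ* T.2.1 + T.2.2 = u')).card
        * p ^ (2 * n)
      = Fintype.card (Matrix (Fin l) (Fin n) (ZMod p) × Matrix (Fin k) (Fin n) (ZMod p) ×
          (Fin n → ZMod p)) := by
  have : Fact p.Prime := ⟨hp⟩
  have hcard : Fintype.card ((Fin n → ZMod p) × (Fin n → ZMod p)) = p ^ (2 * n) := by
    simp [Fintype.card_prod, ZMod.card, two_mul, pow_add]
  rw [← hcard, ← (twoMaskedQueries a a' m mt).card_fiber_mul_card_eq_of_surjective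
    (twoMaskedQueries_surjective a a' hne) (u, u')]
  simp only [twoMaskedQueries_apply, Prod.mk.injEq]
end

section
/- Let F_1 ⊆ F_2 ⊆ ··· be an increasing sequence of σ-algebras on a measurable space A and let F_∞ be the σ-algebra generated by their union. Let P and Q be probability measures on (A, F_∞). Then the relative entropies converge: D(P|_{F_n} ‖ Q|_{F_n}) → D(P|_{F_∞} ‖ Q|_{F_∞}) as n → ∞ (with the convention that the limit may be +∞). -/
/-!
The data processing inequality gives `D(P|_{F_n} ‖ Q|_{F_n}) ≤ D(P ‖ Q)`, so only the lower
bound `D(P ‖ Q) ≤ liminf D(P|_{F_n} ‖ Q|_{F_n})` needs proof. If `P ≪ Q` with density `g`, the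
density of `P|_{F_n}` with respect to `Q|_{F_n}` is `Q[g | F_n]`, which converges to `g` almost
surely by Lévy's upward theorem; Fatou's lemma applied to `klFun x = x log x + 1 - x ≥ 0` gives the
bound. Otherwise some `A ∈ F_∞` has `Q A = 0 < P A`; approximating `A` by sets `t ∈ F_n`, the
tangent-line bound `D(μ ‖ ν) ≥ μ(t) log q - q ν(t)` forces `D(P|_{F_n} ‖ Q|_{F_n}) → ∞`.
-/

open MeasureTheory Filter

open Classical in
/-- The Kullback-Leibler divergence `D(μ‖ν)`: equal to `∫ log(dμ/dν) dμ` when `μ ≪ ν`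
(and the integrand is `μ`-integrable), and `+∞` otherwise. Valued in `ℝ≥0∞`. -/
noncomputable def klDivergence {α : Type*} [MeasurableSpace α] (μ ν : Measure α) : ENNReal :=
  if μ ≪ ν ∧ Integrable (fun x => Real.log (μ.rnDeriv ν x).toReal) μ then
    ENNReal.ofReal (∫ x, Real.log (μ.rnDeriv ν x).toReal ∂μ)
  else ⊤

open Set Real InformationTheory
open scoped ENNReal Topology symmDiff

namespace MeasureTheory

variable {α : Type*} {mα : MeasurableSpace α} {μ ν : Measure α}

lemma isSetRing_setOf_exists_measurableSet {ι : Type*} [Nonempty ι] {m : ι → MeasurableSpace α}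
    (hm : Directed (· ≤ ·) m) : IsSetRing {s | ∃ i, MeasurableSet[m i] s} where
  empty_mem := ⟨Classical.arbitrary ι, @MeasurableSet.empty _ (m _)⟩
  union_mem := by
    rintro s t ⟨i, hs⟩ ⟨j, ht⟩
    obtain ⟨k, hik, hjk⟩ := hm i j
    exact ⟨k, (hik _ hs).union (hjk _ ht)⟩
  sdiff_mem := by
    rintro s t ⟨i, hs⟩ ⟨j, ht⟩
    obtain ⟨k, hik, hjk⟩ := hm i j
    exact ⟨k, (hik _ hs).diff (hjk _ ht)⟩

lemma Filtration.exists_measure_symmDiff_lt [IsFiniteMeasure μ]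
    (ℱ : Filtration ℕ mα) (hℱ : ⨆ n, ℱ n = mα) {s : Set α} (hs : MeasurableSet s)
    {ε : ℝ≥0∞} (hε : 0 < ε) : ∃ n t, MeasurableSet[ℱ n] t ∧ μ (t ∆ s) < ε := by
  obtain ⟨t, ⟨n, ht⟩, hts⟩ := exists_measure_symmDiff_lt_of_generateFrom_isSetRing (μ := μ)
    (isSetRing_setOf_exists_measurableSet ℱ.mono'.directed_le)
    ⟨{univ}, countable_singleton _, by simp, by simp⟩
    (hℱ.symm.trans (MeasurableSpace.measurableSpace_iSup_eq _)) hs hε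
  exact ⟨n, t, ht, hts⟩

lemma measureReal_le_add_measureReal_symmDiff [IsFiniteMeasure μ] (s t : Set α) :
    μ.real s ≤ μ.real t + μ.real (t ∆ s) := by
  calc μ.real s ≤ μ.real (t ∪ t ∆ s) :=
        measureReal_mono fun x hx ↦ by by_cases x ∈ t <;> simp_all [mem_symmDiff]
    _ ≤ μ.real t + μ.real (t ∆ s) := measureReal_union_le _ _

lemma Filtration.exists_measureReal_approx_of_null [IsFiniteMeasure μ] [IsFiniteMeasure ν]
    (ℱ : Filtration ℕ mα) (hℱ : ⨆ n, ℱ n = mα) {s : Set α} (hs : MeasurableSet s)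
    (hνs : ν s = 0) {δ : ℝ} (hδ : 0 < δ) :
    ∃ n t, MeasurableSet[ℱ n] t ∧ μ.real s - δ ≤ μ.real t ∧ ν.real t ≤ δ := by
  obtain ⟨n, t, ht, hts⟩ :=
    ℱ.exists_measure_symmDiff_lt hℱ (μ := μ + ν) hs (ENNReal.ofReal_pos.2 hδ)
  rw [Measure.add_apply] at hts
  have hμ : μ.real (t ∆ s) ≤ δ :=
    ENNReal.toReal_le_of_le_ofReal hδ.le (le_self_add.trans hts.le)
  have hν : ν.real (t ∆ s) ≤ δ :=
    ENNReal.toReal_le_of_le_ofReal hδ.le (le_add_self.trans hts.le)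
  have hνt := measureReal_le_add_measureReal_symmDiff (μ := ν) t s
  rw [measureReal_def ν s, hνs, ENNReal.toReal_zero, symmDiff_comm] at hνt
  exact ⟨n, t, ht, by linarith [measureReal_le_add_measureReal_symmDiff (μ := μ) s t], by linarith⟩

end MeasureTheory

namespace InformationTheory

variable {α : Type*} {mα : MeasurableSpace α} {μ ν : Measure α}

lemma klDivergence_eq_klDiv (h : μ univ = ν univ) : klDivergence μ ν = klDiv μ ν := by
  simp only [klDivergence, klDiv_def, measureReal_def, h, add_sub_cancel_right]
  rfl

lemma mul_log_sub_le_klFun {x q : ℝ} (hx : 0 ≤ x) (hq : 0 < q) : x * log q - q ≤ klFun x := by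
  rcases hx.eq_or_lt with rfl | hx
  · simp [klFun]; linarith
  · have h := mul_le_mul_of_nonneg_left (log_le_sub_one_of_pos (div_pos hq hx)) hx.le
    rw [log_div hq.ne' hx.ne', mul_sub, mul_sub, mul_div_cancel₀ _ hx.ne'] at h
    rw [klFun]; linarith

lemma ofReal_mul_log_sub_le_klDiv [IsFiniteMeasure μ] [IsFiniteMeasure ν] (s : Set α)
    {q : ℝ} (hq : 0 < q) : ENNReal.ofReal (μ.real s * log q - q * ν.real s) ≤ klDiv μ ν := by
  by_cases hμν : μ ≪ ν
  swap; · simp [hμν]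
  by_cases hllr : Integrable (llr μ ν) μ
  swap; · simp [hllr]
  rw [klDiv_eq_integral_klFun, if_pos ⟨hμν, hllr⟩]
  gcongr
  have hg : Integrable (fun x ↦ (μ.rnDeriv ν x).toReal) ν := Measure.integrable_toReal_rnDeriv
  have hkl : Integrable (fun x ↦ klFun (μ.rnDeriv ν x).toReal) ν :=
    (integrable_klFun_rnDeriv_iff hμν).mpr hllr
  calc μ.real s * log q - q * ν.real s
      = ∫ x in s, ((μ.rnDeriv ν x).toReal * log q - q) ∂ν := by
        rw [integral_sub (hg.mul_const _).integrableOn (integrableOn_const (measure_ne_top _ _)),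
          integral_mul_const, Measure.setIntegral_toReal_rnDeriv hμν, setIntegral_const,
          smul_eq_mul, mul_comm q]
    _ ≤ ∫ x in s, klFun (μ.rnDeriv ν x).toReal ∂ν :=
        setIntegral_mono ((hg.mul_const _).sub (integrable_const _)).integrableOn hkl.integrableOn
          fun x ↦ mul_log_sub_le_klFun ENNReal.toReal_nonneg hq
    _ ≤ ∫ x, klFun (μ.rnDeriv ν x).toReal ∂ν :=
        setIntegral_le_integral hkl (ae_of_all _ fun x ↦ klFun_nonneg ENNReal.toReal_nonneg)

lemma klDiv_trim_eq_lintegral_klFun_condExp [IsFiniteMeasure μ] [IsFiniteMeasure ν]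
    {m : MeasurableSpace α} (hm : m ≤ mα) (hμν : μ ≪ ν) :
    klDiv (μ.trim hm) (ν.trim hm) =
      ∫⁻ x, ENNReal.ofReal (klFun ((ν[fun x ↦ (μ.rnDeriv ν x).toReal | m]) x)) ∂ν := by
  rw [klDiv_eq_lintegral_klFun_of_ac (hμν.trim hm), lintegral_trim hm (by fun_prop)]
  refine lintegral_congr_ae ?_
  filter_upwards [ae_of_ae_trim hm (toReal_rnDeriv_trim hm hμν)] with x hx
  rw [hx]

lemma klDiv_le_liminf_klDiv_trim_of_ac [IsFiniteMeasure μ] [IsFiniteMeasure ν]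
    (ℱ : Filtration ℕ mα) (hℱ : ⨆ n, ℱ n = mα) (hμν : μ ≪ ν) :
    klDiv μ ν ≤ atTop.liminf fun n ↦ klDiv (μ.trim (ℱ.le n)) (ν.trim (ℱ.le n)) := by
  set g := fun x ↦ (μ.rnDeriv ν x).toReal
  have hconv : ∀ᵐ x ∂ν, Tendsto (fun n ↦ (ν[g | ℱ n]) x) atTop (𝓝 (g x)) :=
    Measure.integrable_toReal_rnDeriv.tendsto_ae_condExp (by rw [hℱ]; fun_prop)
  simp_rw [klDiv_trim_eq_lintegral_klFun_condExp _ hμν, klDiv_eq_lintegral_klFun_of_ac hμν]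
  calc ∫⁻ x, ENNReal.ofReal (klFun (g x)) ∂ν
      = ∫⁻ x, atTop.liminf fun n ↦ ENNReal.ofReal (klFun ((ν[g | ℱ n]) x)) ∂ν := by
        refine lintegral_congr_ae ?_
        filter_upwards [hconv] with x hx
        exact (((ENNReal.continuous_ofReal.comp continuous_klFun).tendsto _).comp hx).liminf_eq.symm
    _ ≤ _ := lintegral_liminf_le fun n ↦
        (measurable_klFun.comp (stronglyMeasurable_condExp.mono (ℱ.le n)).measurable).ennreal_ofReal

lemma tendsto_klDiv_trim_top_of_not_ac [IsFiniteMeasure μ] [IsFiniteMeasure ν]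
    (ℱ : Filtration ℕ mα) (hℱ : ⨆ n, ℱ n = mα) (hμν : ¬ μ ≪ ν) :
    Tendsto (fun n ↦ klDiv (μ.trim (ℱ.le n)) (ν.trim (ℱ.le n))) atTop (𝓝 ∞) := by
  obtain ⟨s, hs, hνs, hμs⟩ : ∃ s, MeasurableSet s ∧ ν s = 0 ∧ μ s ≠ 0 := by
    contrapose! hμν
    exact Measure.AbsolutelyContinuous.mk hμν
  have hμs_pos : 0 < μ.real s := ENNReal.toReal_pos hμs (measure_ne_top _ _)
  refine ENNReal.tendsto_nhds_top fun M ↦ ?_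
  set q := exp (2 * (M + 2) / μ.real s)
  have hlog : μ.real s / 2 * log q = M + 2 := by
    rw [log_exp]; field_simp
  obtain ⟨N, t, htN, hμt, hνt⟩ := ℱ.exists_measureReal_approx_of_null (μ := μ) hℱ hs hνs
    (lt_min (half_pos hμs_pos) (inv_pos.2 (exp_pos _)))
  have hqt : q * ν.real t ≤ 1 := by
    calc q * ν.real t ≤ q * q⁻¹ := by gcongr; exact hνt.trans (min_le_right _ _)
      _ = 1 := mul_inv_cancel₀ (exp_pos _).ne'
  have hμt_half : μ.real s / 2 ≤ μ.real t := by linarith [min_le_left (μ.real s / 2) q⁻¹]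
  filter_upwards [eventually_ge_atTop N] with n hn
  have htn : MeasurableSet[ℱ n] t := ℱ.mono hn _ htN
  calc (M : ℝ≥0∞) < ENNReal.ofReal (μ.real t * log q - q * ν.real t) := by
        rw [← ENNReal.ofReal_natCast, ENNReal.ofReal_lt_ofReal_iff_of_nonneg (by positivity)]
        have hlog_pos : 0 < log q := by rw [log_exp]; positivity
        nlinarith
    _ = ENNReal.ofReal ((μ.trim (ℱ.le n)).real t * log q - q * (ν.trim (ℱ.le n)).real t) := by
        simp only [measureReal_def, trim_measurableSet_eq _ htn]
    _ ≤ _ := ofReal_mul_log_sub_le_klDiv t (exp_pos _)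

lemma klDiv_le_liminf_klDiv_trim [IsFiniteMeasure μ] [IsFiniteMeasure ν]
    (ℱ : Filtration ℕ mα) (hℱ : ⨆ n, ℱ n = mα) :
    klDiv μ ν ≤ atTop.liminf fun n ↦ klDiv (μ.trim (ℱ.le n)) (ν.trim (ℱ.le n)) := by
  by_cases hμν : μ ≪ ν
  · exact klDiv_le_liminf_klDiv_trim_of_ac ℱ hℱ hμν
  · rw [(tendsto_klDiv_trim_top_of_not_ac ℱ hℱ hμν).liminf_eq]
    exact le_top

theorem tendsto_klDiv_trim [IsFiniteMeasure μ] [IsFiniteMeasure ν]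
    (ℱ : Filtration ℕ mα) (hℱ : ⨆ n, ℱ n = mα) :
    Tendsto (fun n ↦ klDiv (μ.trim (ℱ.le n)) (ν.trim (ℱ.le n))) atTop (𝓝 (klDiv μ ν)) :=
  tendsto_of_le_liminf_of_limsup_le (klDiv_le_liminf_klDiv_trim ℱ hℱ)
    (limsup_le_of_le (by isBoundedDefault) (.of_forall fun n ↦ klDiv_trim_le μ ν (ℱ.le n)))

end InformationTheory

/-- For an increasing sequence of σ-algebras `F₁ ⊆ F₂ ⊆ ⋯` with `F_∞` generated by their
union, and probability measures `P, Q` on `F_∞`, the relative entropies of the restrictions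
converge: `D(P|_{F_n} ‖ Q|_{F_n}) → D(P|_{F_∞} ‖ Q|_{F_∞})` (possibly `+∞`). -/
theorem stmt11 {α : Type*} (F : ℕ → MeasurableSpace α) (hmono : Monotone F)
    (P Q : @Measure α (⨆ n, F n))
    (hP : @IsProbabilityMeasure α (⨆ n, F n) P)
    (hQ : @IsProbabilityMeasure α (⨆ n, F n) Q) :
    Tendsto
      (fun n => @klDivergence α (F n) (P.trim (le_iSup F n)) (Q.trim (le_iSup F n)))
      atTop (nhds (@klDivergence α (⨆ n, F n) P Q)) := by
  let ℱ : Filtration ℕ (⨆ n, F n) := ⟨F, hmono, le_iSup F⟩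
  have h_univ : P univ = Q univ := by simp
  rw [klDivergence_eq_klDiv h_univ]
  refine (tendsto_klDiv_trim ℱ rfl).congr fun n ↦ (klDivergence_eq_klDiv ?_).symm
  simpa only [trim_measurableSet_eq _ MeasurableSet.univ] using h_univ
end
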